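/- arXiv:2009.03153 — 4 statements merged into one kernel-verified Lean document; each statement's English description precedes it below -/
import Mathlib

section
/- Let q ≥ 2 be an integer and Ψ(λ) = (q+1)√(4q − λ²)/(2((q+1)² − λ²)) on [−2√q, 2√q]. Then for every t > 0: if q ≥ 6, |∫_{−2√q}^{2√q} e^{itλ} Ψ(λ) dλ| ≤ (2√q/(q+1)) · (1/t); and if 2 ≤ q ≤ 5, |∫_{−2√q}^{2√q} e^{itλ} Ψ(λ) dλ| ≤ ((q+1)/(q−1) − 2√q/(q+1)) · (1/t). -/
open MeasureTheory intervalIntegral Real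

/-- `Ψ(λ) = (q+1)√(4q − λ²) / (2((q+1)² − λ²))`. -/
noncomputable def Psi (q : ℕ) (l : ℝ) : ℝ :=
  ((q:ℝ)+1) * Real.sqrt (4*q - l^2) / (2*(((q:ℝ)+1)^2 - l^2))

/-!
Since `Ψ` vanishes at `±2√q`, integrating by parts against `e^{itλ} = (e^{itλ}/(it))'` bounds the
integral by `(1/t) ∫ |Ψ'|`. The numerator of `Ψ'` is `(q+1) λ (6q − q² − 1 − λ²)`, so for `q ≥ 6`
`Ψ` increases up to `0` and then decreases, with total variation `2Ψ(0)`, while for `q ≤ 5` it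
has maxima at `E_± = ±√(6q − q² − 1)` and a local minimum at `0`, with total variation
`4Ψ(E_±) − 2Ψ(0)`. On each monotone piece `Ψ'` is automatically integrable.
-/

open Set

section VariationBounds

variable {g g' : ℝ → ℝ} {a b c : ℝ}

theorem intervalIntegrable_deriv_and_integral_abs_of_nonneg (hab : a ≤ b)
    (hg : ContinuousOn g (Icc a b)) (hderiv : ∀ x ∈ Ioo a b, HasDerivAt g (g' x) x)
    (hpos : ∀ x ∈ Ioo a b, 0 ≤ g' x) :
    IntervalIntegrable g' volume a b ∧ ∫ x in a..b, |g' x| = g b - g a := by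
  have hint : IntervalIntegrable g' volume a b :=
    (intervalIntegrable_iff_integrableOn_Ioc_of_le hab).2
      (integrableOn_deriv_of_nonneg hg hderiv hpos)
  refine ⟨hint, ?_⟩
  rw [← integral_eq_sub_of_hasDerivAt_of_le hab hg hderiv hint]
  refine integral_congr_ae ?_
  filter_upwards [volume.ae_ne b] with x hxb hx
  rw [uIoc_of_le hab] at hx
  exact abs_of_nonneg (hpos x ⟨hx.1, lt_of_le_of_ne hx.2 hxb⟩)

theorem intervalIntegrable_deriv_and_integral_abs_of_nonpos (hab : a ≤ b)
    (hg : ContinuousOn g (Icc a b)) (hderiv : ∀ x ∈ Ioo a b, HasDerivAt g (g' x) x)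
    (hneg : ∀ x ∈ Ioo a b, g' x ≤ 0) :
    IntervalIntegrable g' volume a b ∧ ∫ x in a..b, |g' x| = g a - g b := by
  obtain ⟨hint, hvar⟩ := intervalIntegrable_deriv_and_integral_abs_of_nonneg (g := -g)
    (g' := -g') hab hg.neg (fun x hx => (hderiv x hx).neg) (fun x hx => neg_nonneg.2 (hneg x hx))
  simp only [Pi.neg_apply, abs_neg] at hvar
  exact ⟨by simpa using hint.neg, by rw [hvar]; ring⟩

theorem intervalIntegrable_deriv_and_integral_abs_of_unimodal (hab : a ≤ b) (hbc : b ≤ c)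
    (hg : ContinuousOn g (Icc a c)) (hderiv : ∀ x ∈ Ioo a c, HasDerivAt g (g' x) x)
    (hinc : ∀ x ∈ Ioo a b, 0 ≤ g' x) (hdec : ∀ x ∈ Ioo b c, g' x ≤ 0) :
    IntervalIntegrable g' volume a c ∧ ∫ x in a..c, |g' x| = 2 * g b - g a - g c := by
  obtain ⟨hint₁, hvar₁⟩ := intervalIntegrable_deriv_and_integral_abs_of_nonneg hab
    (hg.mono (Icc_subset_Icc_right hbc))
    (fun x hx => hderiv x ⟨hx.1, hx.2.trans_le hbc⟩) hinc
  obtain ⟨hint₂, hvar₂⟩ := intervalIntegrable_deriv_and_integral_abs_of_nonpos hbc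
    (hg.mono (Icc_subset_Icc_left hab))
    (fun x hx => hderiv x ⟨hab.trans_lt hx.1, hx.2⟩) hdec
  refine ⟨hint₁.trans hint₂, ?_⟩
  rw [← integral_add_adjacent_intervals hint₁.abs hint₂.abs, hvar₁, hvar₂]
  ring

end VariationBounds

theorem norm_integral_exp_mul_le_integral_abs_deriv {f f' : ℝ → ℝ} {a b t : ℝ} (hab : a ≤ b)
    (ht : t ≠ 0) (hf : ContinuousOn f (Icc a b)) (hderiv : ∀ x ∈ Ioo a b, HasDerivAt f (f' x) x)
    (hint : IntervalIntegrable f' volume a b) (ha : f a = 0) (hb : f b = 0) :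
    ‖∫ x in a..b, Complex.exp (Complex.I * t * x) * f x‖ ≤ (∫ x in a..b, |f' x|) / |t| := by
  set c : ℂ := Complex.I * t
  have hc : c ≠ 0 := mul_ne_zero Complex.I_ne_zero (Complex.ofReal_ne_zero.2 ht)
  have hexp (x : ℝ) :
      HasDerivAt (fun y : ℝ => Complex.exp (c * y) / c) (Complex.exp (c * x)) x := by
    have := ((Complex.ofRealCLM.hasDerivAt (x := x)).const_mul c).cexp.div_const c
    simpa [mul_div_assoc, hc] using this
  have hparts := integral_mul_deriv_eq_deriv_mul_of_hasDerivAt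
    (u := fun x => (f x : ℂ)) (u' := fun x => (f' x : ℂ))
    (v := fun y : ℝ => Complex.exp (c * y) / c) (v' := fun x => Complex.exp (c * x))
    (by rw [uIcc_of_le hab]; exact Complex.continuous_ofReal.comp_continuousOn hf)
    (fun x _ => (hexp x).continuousAt.continuousWithinAt)
    (by rw [min_eq_left hab, max_eq_right hab]; exact fun x hx => (hderiv x hx).ofReal_comp)
    (fun x _ => hexp x) ⟨hint.1.ofReal, hint.2.ofReal⟩
    ((by fun_prop : Continuous fun x : ℝ => Complex.exp (c * x)).intervalIntegrable _ _)
  simp only [ha, hb, Complex.ofReal_zero, zero_mul, sub_zero, zero_sub] at hparts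
  simp_rw [mul_comm (Complex.exp _), hparts, norm_neg]
  refine (intervalIntegral.norm_integral_le_integral_norm hab).trans_eq ?_
  rw [← intervalIntegral.integral_div]
  refine integral_congr fun x _ => ?_
  simp [c, Complex.norm_exp, div_eq_mul_inv]

noncomputable def Psi' (q : ℕ) (l : ℝ) : ℝ :=
  ((q:ℝ)+1) * l * ((6*q - q^2 - 1) - l^2) / (2 * √(4*q - l^2) * (((q:ℝ)+1)^2 - l^2)^2)

section Psi

variable {q : ℕ} {l : ℝ}

theorem two_mul_sqrt_sq (q : ℕ) : (2 * √(q:ℝ))^2 = 4*q := by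
  rw [mul_pow, sq_sqrt (Nat.cast_nonneg q)]; ring

theorem Psi_neg (q : ℕ) (l : ℝ) : Psi q (-l) = Psi q l := by
  simp only [Psi, neg_sq]

theorem Psi_two_mul_sqrt (q : ℕ) : Psi q (2 * √q) = 0 := by
  simp [Psi, two_mul_sqrt_sq]

theorem Psi_zero (q : ℕ) : Psi q 0 = √q / ((q:ℝ)+1) := by
  have hsqrt : √(4 * (q:ℝ)) = 2 * √q := by
    rw [sqrt_mul' _ (Nat.cast_nonneg q), show (4:ℝ) = 2^2 by norm_num, sqrt_sq zero_le_two]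
  rw [Psi, zero_pow two_ne_zero, sub_zero, sub_zero, hsqrt]
  field_simp

theorem Psi_of_sq_eq (hq : 1 < q) (hl : l^2 = 6*q - q^2 - 1) :
    Psi q l = ((q:ℝ)+1) / (4*((q:ℝ)-1)) := by
  have hq' : (1:ℝ) < q := by exact_mod_cast hq
  rw [Psi, hl, show 4*(q:ℝ) - (6*q - q^2 - 1) = ((q:ℝ)-1)^2 by ring, sqrt_sq (by linarith),
    show ((q:ℝ)+1)^2 - (6*q - q^2 - 1) = 2*((q:ℝ)-1)^2 by ring]
  have : (q:ℝ) - 1 ≠ 0 := by linarith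
  field_simp
  ring

theorem sq_lt_four_mul_of_mem_Ioo (hl : l ∈ Ioo (-(2 * √q)) (2 * √q)) : l^2 < 4*q := by
  rw [← two_mul_sqrt_sq]; exact sq_lt_sq' hl.1 hl.2

theorem continuousOn_Psi (hq : 1 < q) : ContinuousOn (Psi q) (Icc (-(2 * √q)) (2 * √q)) := by
  have hq' : (1:ℝ) < q := by exact_mod_cast hq
  refine ContinuousOn.div (by fun_prop) (by fun_prop) fun l hl => ?_
  have : l^2 ≤ 4*q := by rw [← two_mul_sqrt_sq]; exact sq_le_sq' hl.1 hl.2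
  nlinarith

theorem hasDerivAt_Psi (hq : 1 < q) (hl : l ∈ Ioo (-(2 * √q)) (2 * √q)) :
    HasDerivAt (Psi q) (Psi' q l) l := by
  have hq' : (1:ℝ) < q := by exact_mod_cast hq
  have hl' := sq_lt_four_mul_of_mem_Ioo hl
  have hroot : 0 < 4*(q:ℝ) - l^2 := by linarith
  have hden : ((q:ℝ)+1)^2 - l^2 ≠ 0 := by nlinarith
  have hsq := sq_sqrt hroot.le
  have := (((hasDerivAt_pow 2 l).const_sub (4*(q:ℝ))).sqrt hroot.ne').const_mul ((q:ℝ)+1)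
    |>.div (((hasDerivAt_pow 2 l).const_sub (((q:ℝ)+1)^2)).const_mul 2) (by simpa using hden)
  refine HasDerivAt.congr_deriv (f := Psi q) this ?_
  rw [Psi']
  field_simp
  rw [mul_comm (q:ℝ) 4, hsq]
  ring

theorem Psi'_nonneg (h : 0 ≤ l * ((6*q - q^2 - 1) - l^2)) : 0 ≤ Psi' q l := by
  rw [Psi', mul_assoc]; positivity

theorem Psi'_nonpos (h : l * ((6*q - q^2 - 1) - l^2) ≤ 0) : Psi' q l ≤ 0 := by
  rw [Psi', mul_assoc]
  exact div_nonpos_of_nonpos_of_nonneg (mul_nonpos_of_nonneg_of_nonpos (by positivity) h)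
    (by positivity)

end Psi

section TotalVariation

variable {q : ℕ}

theorem intervalIntegrable_Psi'_and_integral_abs_of_six_le (hq : 6 ≤ q) :
    IntervalIntegrable (Psi' q) volume (-(2 * √q)) (2 * √q) ∧
      ∫ l in (-(2 * √q))..(2 * √q), |Psi' q l| = 2 * √q / ((q:ℝ)+1) := by
  have hq' : (6:ℝ) ≤ q := by exact_mod_cast hq
  have hb : 0 ≤ 2 * √(q:ℝ) := by positivity
  obtain ⟨hint, hvar⟩ := intervalIntegrable_deriv_and_integral_abs_of_unimodal
    (neg_nonpos.2 hb) hb (continuousOn_Psi (by omega)) (fun l hl => hasDerivAt_Psi (by omega) hl)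
    (fun l hl => Psi'_nonneg (mul_nonneg_of_nonpos_of_nonpos hl.2.le (by nlinarith)))
    (fun l hl => Psi'_nonpos (mul_nonpos_of_nonneg_of_nonpos hl.1.le (by nlinarith)))
  refine ⟨hint, hvar.trans ?_⟩
  rw [Psi_neg, Psi_two_mul_sqrt, Psi_zero]
  ring

theorem intervalIntegrable_Psi'_and_integral_abs_of_le_five (hq : 1 < q) (hq5 : q ≤ 5) :
    IntervalIntegrable (Psi' q) volume (-(2 * √q)) (2 * √q) ∧
      ∫ l in (-(2 * √q))..(2 * √q), |Psi' q l|
        = ((q:ℝ)+1) / ((q:ℝ)-1) - 2 * √q / ((q:ℝ)+1) := by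
  have hq' : (1:ℝ) < q := by exact_mod_cast hq
  have hq5' : (q:ℝ) ≤ 5 := by exact_mod_cast hq5
  have hb : 0 ≤ 2 * √(q:ℝ) := by positivity
  set E := √(6*(q:ℝ) - q^2 - 1)
  have hE0 : 0 ≤ E := sqrt_nonneg _
  have hE : E^2 = 6*q - q^2 - 1 := sq_sqrt (by nlinarith)
  have hEb : E ≤ 2 * √q := (sq_le_sq₀ hE0 hb).1 (by rw [hE, two_mul_sqrt_sq]; nlinarith)
  have hinc₁ : ∀ l ∈ Ioo (-(2 * √q)) (-E), 0 ≤ Psi' q l := fun l hl =>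
    Psi'_nonneg (mul_nonneg_of_nonpos_of_nonpos (by linarith [hl.2]) (by nlinarith [hl.2]))
  have hdec₁ : ∀ l ∈ Ioo (-E) 0, Psi' q l ≤ 0 := fun l hl =>
    Psi'_nonpos (mul_nonpos_of_nonpos_of_nonneg hl.2.le
      (by linarith [sq_lt_sq' hl.1 (hl.2.trans_le hE0)]))
  have hinc₂ : ∀ l ∈ Ioo 0 E, 0 ≤ Psi' q l := fun l hl =>
    Psi'_nonneg (mul_nonneg hl.1.le
      (by linarith [sq_lt_sq' ((neg_nonpos.2 hE0).trans_lt hl.1) hl.2]))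
  have hdec₂ : ∀ l ∈ Ioo E (2 * √q), Psi' q l ≤ 0 := fun l hl =>
    Psi'_nonpos (mul_nonpos_of_nonneg_of_nonpos (by linarith [hl.1]) (by nlinarith [hl.1]))
  obtain ⟨hint₁, hvar₁⟩ := intervalIntegrable_deriv_and_integral_abs_of_unimodal
    (neg_le_neg hEb) (neg_nonpos.2 hE0) (continuousOn_Psi hq |>.mono (Icc_subset_Icc_right hb))
    (fun l hl => hasDerivAt_Psi hq ⟨hl.1, hl.2.trans_le hb⟩) hinc₁ hdec₁
  obtain ⟨hint₂, hvar₂⟩ := intervalIntegrable_deriv_and_integral_abs_of_unimodal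
    hE0 hEb (continuousOn_Psi hq |>.mono (Icc_subset_Icc_left (neg_nonpos.2 hb)))
    (fun l hl => hasDerivAt_Psi hq ⟨(neg_nonpos.2 hb).trans_lt hl.1, hl.2⟩) hinc₂ hdec₂
  refine ⟨hint₁.trans hint₂, ?_⟩
  rw [← integral_add_adjacent_intervals hint₁.abs hint₂.abs, hvar₁, hvar₂, Psi_neg, Psi_neg,
    Psi_two_mul_sqrt, Psi_zero, Psi_of_sq_eq hq hE]
  have : (q:ℝ) - 1 ≠ 0 := by linarith
  field_simp
  ring

end TotalVariation

/-- Total-variation bounds on the oscillatory integral `∫_{−2√q}^{2√q} e^{itλ}Ψ(λ)dλ`: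
for all `t > 0`, the modulus is at most `(2√q/(q+1))/t` if `q ≥ 6`, and at most
`((q+1)/(q−1) − 2√q/(q+1))/t` if `2 ≤ q ≤ 5`. -/
theorem total_variation_bound (q : ℕ) (hq : 2 ≤ q) :
    ∀ t : ℝ, 0 < t →
      ((6 ≤ q →
        ‖∫ l in (-(2*Real.sqrt q))..(2*Real.sqrt q),
            Complex.exp (Complex.I * t * l) * (Psi q l : ℂ)‖
          ≤ (2*Real.sqrt q/((q:ℝ)+1)) / t) ∧
      (q ≤ 5 →
        ‖∫ l in (-(2*Real.sqrt q))..(2*Real.sqrt q),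
            Complex.exp (Complex.I * t * l) * (Psi q l : ℂ)‖
          ≤ (((q:ℝ)+1)/((q:ℝ)-1) - 2*Real.sqrt q/((q:ℝ)+1)) / t)) := by
  intro t ht
  have hbound := fun hint => norm_integral_exp_mul_le_integral_abs_deriv
    (neg_le_self (by positivity)) ht.ne' (continuousOn_Psi hq) (fun l hl => hasDerivAt_Psi hq hl)
    hint (by rw [Psi_neg, Psi_two_mul_sqrt]) (Psi_two_mul_sqrt q)
  rw [abs_of_pos ht] at hbound
  refine ⟨fun hq6 => ?_, fun hq5 => ?_⟩
  · obtain ⟨hint, hvar⟩ := intervalIntegrable_Psi'_and_integral_abs_of_six_le hq6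
    exact hvar ▸ hbound hint
  · obtain ⟨hint, hvar⟩ := intervalIntegrable_Psi'_and_integral_abs_of_le_five hq hq5
    exact hvar ▸ hbound hint
end

section
/- Let q ≥ 2 be an integer, Ψ(λ) = (q+1)√(4q − λ²)/(2((q+1)² − λ²)) on [−2√q, 2√q], and Φ_n the spherical function. There exists a constant C depending only on q such that for every integer n ≥ 1 and every t > 0, |∫_{−2√q}^{2√q} e^{itλ} Ψ(λ) Φ_n'(λ) dλ| ≤ C/t. -/
open Set Real MeasureTheory intervalIntegral

/-- The spherical function of the `(q+1)`-regular tree. -/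
noncomputable def Phi (q n : ℕ) (l : ℝ) : ℝ :=
  (q:ℝ) ^ (-(n:ℝ)/2) *
    ((2/((q:ℝ)+1)) * (Polynomial.Chebyshev.T ℝ (n:ℤ)).eval (l/(2*Real.sqrt q))
      + (((q:ℝ)-1)/((q:ℝ)+1)) * (Polynomial.Chebyshev.U ℝ (n:ℤ)).eval (l/(2*Real.sqrt q)))

/-!
Write `Ψ(λ) = √(4q - λ²) h(λ)`, where `h(λ) = (q+1) / (2((q+1)² - λ²))` is smooth on
`[-2√q, 2√q]` because `(q+1)² - 4q = (q-1)² > 0`. Then `ΨΦ_n'` vanishes at both endpoints,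
and one integration by parts bounds the integral by `t⁻¹ ∫ |(ΨΦ_n')'|`. The derivative of
`√(a² - λ²)` is dominated by `a / √(a² - λ²)`, whose integral over `[-a, a]` is `aπ`.
On `[-1, 1]` the `k`-th derivatives of `T_n` and `U_n` are at most `(n+1)^(2k)` and
`(n+1)^(2k+1)`, so `Φ_n'` and `Φ_n''` are `O(q^(-n/2) n⁵)`, which is bounded in `n`.
-/

open Polynomial Polynomial.Chebyshev Complex

namespace Polynomial

theorem iterate_derivative_succ_X_mul {R : Type*} [CommSemiring R] (p : R[X]) (k : ℕ) :
    derivative^[k + 1] (X * p) =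
      ((k + 1 : ℕ) : R[X]) * derivative^[k] p + X * derivative^[k + 1] p := by
  induction k with
  | zero => simp [derivative_mul]
  | succ k ih =>
    rw [Function.iterate_succ_apply', ih, Function.iterate_succ_apply' _ (k + 1)]
    simp only [derivative_add, derivative_mul, derivative_natCast, derivative_X,
      ← Function.iterate_succ_apply' derivative]
    push_cast
    ring

theorem iterate_derivative_comp_C_mul_X {R : Type*} [CommSemiring R] (p : R[X]) (r : R) (k : ℕ) :
    derivative^[k] (p.comp (C r * X)) = C (r ^ k) * (derivative^[k] p).comp (C r * X) := by
  induction k with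
  | zero => simp
  | succ k ih =>
    rw [Function.iterate_succ_apply', ih, derivative_C_mul, derivative_comp, derivative_C_mul_X,
      ← Function.iterate_succ_apply' derivative, pow_succ, C_mul]
    ring

namespace Chebyshev

theorem iterate_derivative_U_succ {R : Type*} [CommRing R] (k m : ℕ) :
    derivative^[k + 1] (U R (m + 1)) =
      ((k + m + 2 : ℕ) : R[X]) * derivative^[k] (U R m) + X * derivative^[k + 1] (U R m) := by
  rw [U_eq_X_mul_U_add_T, iterate_map_add, iterate_derivative_succ_X_mul,
    Function.iterate_succ_apply derivative k (T R _), T_derivative_eq_U, add_sub_cancel_right,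
    iterate_derivative_intCast_mul]
  push_cast
  ring

theorem abs_eval_U_real_le {x : ℝ} (hx : |x| ≤ 1) (n : ℕ) : |(U ℝ n).eval x| ≤ n + 1 := by
  induction n with
  | zero => simp
  | succ m ih =>
    have hT := abs_eval_T_real_le_one ((m : ℤ) + 1) hx
    rw [Nat.cast_succ, U_eq_X_mul_U_add_T, eval_add, eval_mul, eval_X]
    calc |x * (U ℝ m).eval x + (T ℝ (m + 1)).eval x|
        ≤ |x| * |(U ℝ m).eval x| + |(T ℝ (m + 1)).eval x| := by
          rw [← abs_mul]; exact abs_add_le _ _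
      _ ≤ 1 * (m + 1) + 1 := by gcongr
      _ = (m + 1 : ℕ) + 1 := by push_cast; ring

theorem abs_eval_iterate_derivative_U_real_le {x : ℝ} (hx : |x| ≤ 1) (k n : ℕ) :
    |(derivative^[k] (U ℝ n)).eval x| ≤ (n + 1) ^ (2 * k + 1) := by
  induction k generalizing n with
  | zero => simpa using abs_eval_U_real_le hx n
  | succ k ihk =>
    induction n with
    | zero => simp [iterate_derivative_one]
    | succ m ihm =>
      have hm : (0 : ℝ) ≤ m + 1 := by positivity
      have bernoulli := pow_add_mul_le_add_pow hm (by linarith : (0 : ℝ) ≤ 2 * (m + 1) + 1)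
        (2 * (k + 1) + 1)
      rw [Nat.cast_succ, iterate_derivative_U_succ, eval_add, eval_mul, eval_mul, eval_X,
        eval_natCast]
      calc _ ≤ ((k + m + 2 : ℕ) : ℝ) * |(derivative^[k] (U ℝ m)).eval x|
            + |x| * |(derivative^[k + 1] (U ℝ m)).eval x| := by
            refine (abs_add_le _ _).trans ?_
            rw [abs_mul, abs_mul, Nat.abs_cast]
        _ ≤ ((k + m + 2 : ℕ) : ℝ) * (m + 1) ^ (2 * k + 1)
            + 1 * (m + 1) ^ (2 * (k + 1) + 1) := by
            gcongr
            exact ihk m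
        _ ≤ ((m + 1 : ℕ) + 1) ^ (2 * (k + 1) + 1) := by
            -- Bernoulli `(N + 1)^(2k+3) ≥ N^(2k+3) + (2k + 3) N^(2k+2)` for `N = m + 1`,
            -- and `(2k + 3) N ≥ k + m + 2`
            rw [show 2 * (k + 1) + 1 - 1 = 2 * k + 1 + 1 by omega] at bernoulli
            rw [show 2 * (k + 1) + 1 = 2 * k + 1 + 1 + 1 by ring] at bernoulli ⊢
            push_cast at bernoulli ⊢
            simp only [pow_succ] at bernoulli ⊢
            have hP : (0 : ℝ) ≤ (m + 1) ^ (2 * k) * (m + 1) := by positivity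
            have hk : (0 : ℝ) ≤ k := k.cast_nonneg
            have hm' : (0 : ℝ) ≤ m := m.cast_nonneg
            nlinarith [mul_nonneg hP hk, mul_nonneg hP hm', mul_nonneg (mul_nonneg hP hm') hk]

theorem abs_eval_iterate_derivative_T_real_le {x : ℝ} (hx : |x| ≤ 1) (k n : ℕ) :
    |(derivative^[k] (T ℝ n)).eval x| ≤ (n + 1) ^ (2 * k) := by
  cases k with
  | zero => simpa using abs_eval_T_real_le_one n hx
  | succ k =>
    cases n with
    | zero => simp [iterate_derivative_one]
    | succ m =>
      rw [Function.iterate_succ_apply, Nat.cast_succ, T_derivative_eq_U, add_sub_cancel_right,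
        iterate_derivative_intCast_mul, eval_mul, eval_intCast, abs_mul]
      push_cast
      calc |(m : ℝ) + 1| * |(derivative^[k] (U ℝ m)).eval x|
            ≤ (m + 1) * (m + 1) ^ (2 * k + 1) := by
            rw [abs_of_nonneg (by positivity)]
            gcongr
            exact abs_eval_iterate_derivative_U_real_le hx k m
        _ ≤ (m + 1 + 1) ^ (2 * (k + 1)) := by
            rw [← pow_succ', show 2 * k + 1 + 1 = 2 * (k + 1) by ring]
            gcongr
            linarith

end Chebyshev
end Polynomial

noncomputable def chebyshevMix (q n : ℕ) : ℝ[X] :=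
  C (2 / ((q : ℝ) + 1)) * T ℝ n + C (((q : ℝ) - 1) / ((q : ℝ) + 1)) * U ℝ n

noncomputable def sphericalPoly (q n : ℕ) : ℝ[X] :=
  C ((q : ℝ) ^ (-(n : ℝ) / 2)) * (chebyshevMix q n).comp (C (2 * √q)⁻¹ * X)

theorem Phi_eq_eval_sphericalPoly (q n : ℕ) : Phi q n = fun l ↦ (sphericalPoly q n).eval l := by
  ext l
  simp [Phi, sphericalPoly, chebyshevMix, div_eq_mul_inv, mul_comm]

theorem abs_eval_iterate_derivative_chebyshevMix_le {q : ℕ} (hq : 1 ≤ q) {x : ℝ}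
    (hx : |x| ≤ 1) (k n : ℕ) :
    |(derivative^[k] (chebyshevMix q n)).eval x| ≤ (n + 1) ^ (2 * k + 1) := by
  have hq' : (1 : ℝ) ≤ q := by exact_mod_cast hq
  have hT : |(derivative^[k] (T ℝ n)).eval x| ≤ (n + 1) ^ (2 * k + 1) :=
    (abs_eval_iterate_derivative_T_real_le hx k n).trans
      (pow_le_pow_right₀ (by linarith [n.cast_nonneg (α := ℝ)]) (by omega))
  have hU := abs_eval_iterate_derivative_U_real_le hx k n
  have hα : 0 ≤ 2 / ((q : ℝ) + 1) := by positivity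
  have hβ : 0 ≤ ((q : ℝ) - 1) / ((q : ℝ) + 1) := div_nonneg (by linarith) (by positivity)
  have hsum : 2 / ((q : ℝ) + 1) + ((q : ℝ) - 1) / ((q : ℝ) + 1) = 1 := by
    field_simp; ring
  simp only [chebyshevMix, iterate_map_add, iterate_derivative_C_mul, eval_add, eval_mul, eval_C]
  calc _ ≤ 2 / ((q : ℝ) + 1) * |(derivative^[k] (T ℝ n)).eval x|
        + ((q : ℝ) - 1) / ((q : ℝ) + 1) * |(derivative^[k] (U ℝ n)).eval x| := by
        refine (abs_add_le _ _).trans_eq ?_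
        rw [abs_mul, abs_mul, abs_of_nonneg hα, abs_of_nonneg hβ]
    _ ≤ 2 / ((q : ℝ) + 1) * (n + 1) ^ (2 * k + 1)
        + ((q : ℝ) - 1) / ((q : ℝ) + 1) * (n + 1) ^ (2 * k + 1) := by gcongr
    _ = (n + 1) ^ (2 * k + 1) := by rw [← add_mul, hsum, one_mul]

theorem abs_eval_iterate_derivative_sphericalPoly_le {q : ℕ} (hq : 1 ≤ q) {l : ℝ}
    (hl : l ∈ Icc (-(2 * √q)) (2 * √q)) (k n : ℕ) :
    |(derivative^[k] (sphericalPoly q n)).eval l|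
      ≤ (q : ℝ) ^ (-(n : ℝ) / 2) * (n + 1) ^ (2 * k + 1) := by
  have hsq : 1 ≤ √(q : ℝ) := one_le_sqrt.mpr (by exact_mod_cast hq)
  have hr : |(2 * √q)⁻¹| ≤ 1 := by
    rw [abs_inv, abs_of_pos (by positivity)]
    exact inv_le_one_of_one_le₀ (by linarith)
  have hx : |(2 * √q)⁻¹ * l| ≤ 1 := by
    rw [abs_mul, abs_inv, abs_of_pos (by positivity), inv_mul_le_one₀ (by positivity)]
    exact abs_le.mpr hl
  rw [sphericalPoly, iterate_derivative_C_mul, iterate_derivative_comp_C_mul_X]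
  simp only [eval_mul, eval_C, eval_comp, eval_X, abs_mul, abs_pow]
  rw [abs_of_pos (by positivity : (0 : ℝ) < (q : ℝ) ^ (-(n : ℝ) / 2))]
  calc _ ≤ (q : ℝ) ^ (-(n : ℝ) / 2) * (1 * (n + 1) ^ (2 * k + 1)) := by
        gcongr
        · exact pow_le_one₀ (abs_nonneg _) hr
        · exact abs_eval_iterate_derivative_chebyshevMix_le hq hx k n
    _ = _ := by ring

theorem exists_forall_rpow_neg_half_mul_pow_le {r : ℝ} (hr : 1 < r) (d : ℕ) :
    ∃ M, ∀ n : ℕ, r ^ (-(n : ℝ) / 2) * (n + 1) ^ d ≤ M := by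
  have hs : 1 < √r := lt_sqrt_of_sq_lt (by simpa using hr)
  obtain ⟨M, hM⟩ := ((tendsto_pow_const_div_const_pow_of_one_lt d hs).comp
    (Filter.tendsto_add_atTop_nat 1)).bddAbove_range
  refine ⟨√r * M, fun n ↦ ?_⟩
  have h := hM (mem_range_self n)
  simp only [Function.comp_apply, Nat.cast_succ] at h
  have hpow : r ^ (-(n : ℝ) / 2) = (√r ^ n)⁻¹ := by
    rw [sqrt_eq_rpow, ← rpow_natCast, ← rpow_mul (by linarith), ← rpow_neg (by linarith)]
    ring_nf
  calc r ^ (-(n : ℝ) / 2) * (n + 1) ^ d = √r * (((n : ℝ) + 1) ^ d / √r ^ (n + 1)) := by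
        rw [hpow, pow_succ]
        field_simp
    _ ≤ √r * M := by gcongr

theorem norm_integral_cexp_mul_le_of_eq_zero {f f' : ℝ → ℂ} {a b t : ℝ} (hab : a ≤ b)
    (ht : t ≠ 0) (hf : ContinuousOn f (Icc a b)) (hff' : ∀ x ∈ Ioo a b, HasDerivAt f (f' x) x)
    (hf' : IntervalIntegrable f' volume a b) (hfa : f a = 0) (hfb : f b = 0) :
    ‖∫ x in a..b, cexp (I * t * x) * f x‖ ≤ (∫ x in a..b, ‖f' x‖) / |t| := by
  have hIt : I * t ≠ 0 := mul_ne_zero I_ne_zero (ofReal_ne_zero.mpr ht)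
  set v : ℝ → ℂ := fun x ↦ cexp (I * t * x) / (I * t)
  have hv : ∀ x : ℝ, HasDerivAt v (cexp (I * t * x)) x := fun x ↦ by
    have := ((hasDerivAt_id (x : ℂ)).const_mul (I * t)).cexp.div_const (I * t) |>.comp_ofReal
    simpa [v, hIt, mul_comm] using this
  have hv_cont : Continuous v := by fun_prop
  have hnorm_v : ∀ x, ‖f' x * v x‖ = ‖f' x‖ / |t| := fun x ↦ by
    simp [v, norm_exp, div_eq_mul_inv]
  have hparts := integral_mul_deriv_eq_deriv_mul_of_hasDerivAt (u := f) (v := v)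
    (by rwa [uIcc_of_le hab]) hv_cont.continuousOn
    (by simpa [hab] using hff') (fun x _ ↦ hv x) hf'
    ((by fun_prop : Continuous fun x : ℝ ↦ cexp (I * t * x)).intervalIntegrable _ _)
  simp only [hfa, hfb, zero_mul, sub_zero, zero_sub] at hparts
  calc ‖∫ x in a..b, cexp (I * t * x) * f x‖ = ‖∫ x in a..b, f' x * v x‖ := by
        simp_rw [mul_comm (cexp _), hparts, norm_neg]
    _ ≤ ∫ x in a..b, ‖f' x * v x‖ := norm_integral_le_integral_norm hab
    _ = (∫ x in a..b, ‖f' x‖) / |t| := by simp_rw [hnorm_v, intervalIntegral.integral_div]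

theorem hasDerivAt_arcsin_div {a x : ℝ} (ha : 0 < a) (hx : x ∈ Ioo (-a) a) :
    HasDerivAt (fun y ↦ arcsin (y / a)) (√(a ^ 2 - x ^ 2))⁻¹ x := by
  have hxa : x / a ∈ Ioo (-1) 1 := by
    constructor
    · rw [lt_div_iff₀ ha]; linarith [hx.1]
    · rw [div_lt_iff₀ ha]; linarith [hx.2]
  have := (hasDerivAt_arcsin hxa.1.ne' hxa.2.ne).comp x ((hasDerivAt_id x).div_const a)
  refine this.congr_deriv ?_
  have : a ^ 2 - x ^ 2 = a ^ 2 * (1 - (x / a) ^ 2) := by field_simp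
  rw [this, sqrt_mul (by positivity), sqrt_sq ha.le]
  simp [div_eq_mul_inv, mul_comm]

theorem intervalIntegrable_inv_sqrt_sq_sub_sq {a : ℝ} (ha : 0 < a) :
    IntervalIntegrable (fun x ↦ (√(a ^ 2 - x ^ 2))⁻¹) volume (-a) a := by
  have hle : -a ≤ a := by linarith
  refine intervalIntegrable_deriv_of_nonneg (g := fun y ↦ arcsin (y / a)) (by fun_prop)
    (fun x hx ↦ hasDerivAt_arcsin_div ha (by simpa [hle] using hx)) (fun x _ ↦ by positivity)

theorem integral_inv_sqrt_sq_sub_sq {a : ℝ} (ha : 0 < a) :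
    ∫ x in (-a)..a, (√(a ^ 2 - x ^ 2))⁻¹ = π := by
  rw [integral_eq_sub_of_hasDerivAt_of_le (by linarith) (by fun_prop)
    (fun x hx ↦ hasDerivAt_arcsin_div ha hx) (intervalIntegrable_inv_sqrt_sq_sub_sq ha)]
  simp [neg_div, div_self ha.ne']

theorem norm_integral_cexp_mul_sqrt_mul_le {a t B₀ B₁ : ℝ} {g g' : ℝ → ℝ} (ha : 0 < a)
    (ht : t ≠ 0) (hg : ∀ x ∈ Icc (-a) a, HasDerivAt g (g' x) x)
    (hg' : ContinuousOn g' (Icc (-a) a)) (hgB : ∀ x ∈ Icc (-a) a, |g x| ≤ B₀)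
    (hg'B : ∀ x ∈ Icc (-a) a, |g' x| ≤ B₁) :
    ‖∫ x in (-a)..a, cexp (I * t * x) * ↑(√(a ^ 2 - x ^ 2) * g x)‖
      ≤ a * (π * B₀ + 2 * a * B₁) / |t| := by
  have hle : -a ≤ a := by linarith
  set w : ℝ → ℝ := fun x ↦ (√(a ^ 2 - x ^ 2))⁻¹
  set F : ℝ → ℝ := fun x ↦ -x * w x * g x + √(a ^ 2 - x ^ 2) * g' x
  have hw := intervalIntegrable_inv_sqrt_sq_sub_sq ha
  have hg_cont : ContinuousOn g (Icc (-a) a) := fun x hx ↦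
    (hg x hx).continuousAt.continuousWithinAt
  have hF_int : IntervalIntegrable F volume (-a) a := by
    refine ((hw.continuousOn_mul (f := w) (g := fun x ↦ -x) (by fun_prop)).mul_continuousOn
      (by rwa [uIcc_of_le hle])).add (ContinuousOn.intervalIntegrable ?_)
    rw [uIcc_of_le hle]
    exact (by fun_prop : Continuous fun x ↦ √(a ^ 2 - x ^ 2)).continuousOn.mul hg'
  have hderiv : ∀ x ∈ Ioo (-a) a, HasDerivAt (fun x ↦ √(a ^ 2 - x ^ 2) * g x) (F x) x := by
    intro x hx
    have hpos : 0 < a ^ 2 - x ^ 2 := by nlinarith [hx.1, hx.2]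
    have hs := ((hasDerivAt_pow 2 x).const_sub (a ^ 2)).sqrt hpos.ne'
    refine (hs.mul (hg x (Ioo_subset_Icc_self hx))).congr_deriv ?_
    simp only [F, w]
    field_simp
    rw [sq_sqrt hpos.le]
    ring
  have hF_le : ∀ x ∈ Icc (-a) a, |F x| ≤ a * B₀ * w x + a * B₁ := by
    intro x hx
    have hxa : |x| ≤ a := abs_le.mpr hx
    have hs : √(a ^ 2 - x ^ 2) ≤ a := by
      rw [sqrt_le_left ha.le]; nlinarith
    have hw0 : 0 ≤ w x := by positivity
    calc |F x| ≤ |x| * w x * |g x| + √(a ^ 2 - x ^ 2) * |g' x| := by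
          refine (abs_add_le _ _).trans_eq ?_
          rw [abs_mul, abs_mul, abs_mul, abs_neg, abs_of_nonneg hw0,
            abs_of_nonneg (sqrt_nonneg _)]
      _ ≤ a * w x * B₀ + a * B₁ := by
          gcongr
          · exact hgB x hx
          · exact hg'B x hx
      _ = a * B₀ * w x + a * B₁ := by ring
  refine (norm_integral_cexp_mul_le_of_eq_zero hle ht ?_ (fun x hx ↦ (hderiv x hx).ofReal_comp)
    ⟨hF_int.1.ofReal, hF_int.2.ofReal⟩ (by simp) (by simp)).trans ?_
  · exact continuous_ofReal.comp_continuousOn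
      ((by fun_prop : Continuous fun x ↦ √(a ^ 2 - x ^ 2)).continuousOn.mul hg_cont)
  gcongr
  calc ∫ x in (-a)..a, ‖(F x : ℂ)‖ ≤ ∫ x in (-a)..a, (a * B₀ * w x + a * B₁) := by
        refine integral_mono_on hle ?_ ((hw.const_mul _).add intervalIntegrable_const) ?_
        · simpa using hF_int.norm
        · simpa using hF_le
    _ = a * (π * B₀ + 2 * a * B₁) := by
        rw [integral_add (hw.const_mul _) intervalIntegrable_const,
          intervalIntegral.integral_const_mul, integral_inv_sqrt_sq_sub_sq ha,
          intervalIntegral.integral_const]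
        simp only [smul_eq_mul]
        ring

noncomputable def psiFactor (q : ℕ) (l : ℝ) : ℝ :=
  ((q : ℝ) + 1) / (2 * (((q : ℝ) + 1) ^ 2 - l ^ 2))

noncomputable def psiFactorDeriv (q : ℕ) (l : ℝ) : ℝ :=
  ((q : ℝ) + 1) * l / (((q : ℝ) + 1) ^ 2 - l ^ 2) ^ 2

theorem Psi_eq_sqrt_mul_psiFactor (q : ℕ) (l : ℝ) :
    Psi q l = √((2 * √q) ^ 2 - l ^ 2) * psiFactor q l := by
  rw [Psi, psiFactor, mul_pow, sq_sqrt q.cast_nonneg]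
  norm_num
  ring

theorem sq_sub_sq_pos_of_mem_Icc {q : ℕ} (hq : 2 ≤ q) {l : ℝ}
    (hl : l ∈ Icc (-(2 * √q)) (2 * √q)) :
    0 < ((q : ℝ) + 1) ^ 2 - l ^ 2 := by
  have hq' : (2 : ℝ) ≤ q := by exact_mod_cast hq
  have hl2 : l ^ 2 ≤ 4 * q := by
    have := sq_le_sq' hl.1 hl.2
    rwa [mul_pow, sq_sqrt (by linarith), show (2 : ℝ) ^ 2 = 4 by norm_num] at this
  nlinarith

theorem hasDerivAt_psiFactor (q : ℕ) {l : ℝ} (hl : ((q : ℝ) + 1) ^ 2 - l ^ 2 ≠ 0) :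
    HasDerivAt (psiFactor q) (psiFactorDeriv q l) l := by
  have := ((hasDerivAt_pow 2 l).const_sub (((q : ℝ) + 1) ^ 2)).const_mul 2
    |>.inv (mul_ne_zero two_ne_zero hl) |>.const_mul ((q : ℝ) + 1)
  refine this.congr_deriv ?_ |>.congr_of_eventuallyEq (Filter.Eventually.of_forall fun x ↦ ?_)
  · simp only [psiFactorDeriv]
    field_simp
    ring
  · simp [psiFactor, div_eq_mul_inv]

theorem continuousOn_psiFactor {q : ℕ} (hq : 2 ≤ q) :
    ContinuousOn (psiFactor q) (Icc (-(2 * √q)) (2 * √q)) :=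
  continuousOn_const.div (by fun_prop) fun l hl ↦ by
    have := sq_sub_sq_pos_of_mem_Icc hq hl
    positivity

theorem continuousOn_psiFactorDeriv {q : ℕ} (hq : 2 ≤ q) :
    ContinuousOn (psiFactorDeriv q) (Icc (-(2 * √q)) (2 * √q)) :=
  ContinuousOn.div (by fun_prop) (by fun_prop) fun l hl ↦ by
    have := sq_sub_sq_pos_of_mem_Icc hq hl
    positivity

theorem exists_bound_psiFactor_mul_eval_derivative_sphericalPoly {q : ℕ} (hq : 2 ≤ q) :
    ∃ B₀ B₁ : ℝ, ∀ n : ℕ, ∀ l ∈ Icc (-(2 * √q)) (2 * √q),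
      |psiFactor q l * (derivative (sphericalPoly q n)).eval l| ≤ B₀ ∧
      |psiFactorDeriv q l * (derivative (sphericalPoly q n)).eval l
        + psiFactor q l * (derivative (derivative (sphericalPoly q n))).eval l| ≤ B₁ := by
  obtain ⟨H₀, hH₀⟩ := isCompact_Icc.exists_bound_of_continuousOn (continuousOn_psiFactor hq)
  obtain ⟨H₁, hH₁⟩ :=
    isCompact_Icc.exists_bound_of_continuousOn (continuousOn_psiFactorDeriv hq)
  obtain ⟨M, hM⟩ := exists_forall_rpow_neg_half_mul_pow_le (r := q) (by exact_mod_cast hq) 5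
  have hP : ∀ n, ∀ l ∈ Icc (-(2 * √q)) (2 * √q), ∀ k ≤ 2,
      |(derivative^[k] (sphericalPoly q n)).eval l| ≤ M := fun n l hl k hk ↦
    (abs_eval_iterate_derivative_sphericalPoly_le (by omega) hl k n).trans <|
      (mul_le_mul_of_nonneg_left (pow_le_pow_right₀ (by simp) (by omega)) (by positivity)).trans
        (hM n)
  refine ⟨H₀ * M, H₁ * M + H₀ * M, fun n l hl ↦ ?_⟩
  have h₀ : |psiFactor q l| ≤ H₀ := by simpa using hH₀ l hl
  have h₁ : |psiFactorDeriv q l| ≤ H₁ := by simpa using hH₁ l hl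
  have hP₁ := hP n l hl 1 (by norm_num)
  have hP₂ := hP n l hl 2 (by norm_num)
  simp only [Function.iterate_succ, Function.comp_apply, Function.iterate_zero, id] at hP₁ hP₂
  refine ⟨?_, (abs_add_le _ _).trans ?_⟩
  · rw [abs_mul]
    exact mul_le_mul h₀ hP₁ (abs_nonneg _) ((abs_nonneg _).trans h₀)
  · rw [abs_mul, abs_mul]
    exact add_le_add (mul_le_mul h₁ hP₁ (abs_nonneg _) ((abs_nonneg _).trans h₁))
      (mul_le_mul h₀ hP₂ (abs_nonneg _) ((abs_nonneg _).trans h₀))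

/-- There is a constant `C` depending only on `q` such that for every `n ≥ 1` and `t > 0`,
`|∫_{−2√q}^{2√q} e^{itλ} Ψ(λ)Φ_n'(λ) dλ| ≤ C/t`. -/
theorem PsiPhi_deriv_oscillatory_bound (q : ℕ) (hq : 2 ≤ q) :
    ∃ C : ℝ, 0 < C ∧ ∀ n : ℕ, 1 ≤ n → ∀ t : ℝ, 0 < t →
      ‖∫ l in (-(2*Real.sqrt q))..(2*Real.sqrt q),
          Complex.exp (Complex.I * t * l) *
            Complex.ofReal (Psi q l * deriv (Phi q n) l)‖
        ≤ C / t := by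
  obtain ⟨B₀, B₁, hB⟩ := exists_bound_psiFactor_mul_eval_derivative_sphericalPoly hq
  have ha : 0 < 2 * √q := by positivity
  refine ⟨max (2 * √q * (π * B₀ + 2 * (2 * √q) * B₁)) 1, by positivity,
    fun n _ t ht ↦ ?_⟩
  have hintegrand : ∀ l, Psi q l * deriv (Phi q n) l =
      √((2 * √q) ^ 2 - l ^ 2) * (psiFactor q l * (derivative (sphericalPoly q n)).eval l) := by
    simp [Phi_eq_eval_sphericalPoly, Polynomial.deriv, Psi_eq_sqrt_mul_psiFactor, mul_assoc]
  simp_rw [hintegrand]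
  refine (norm_integral_cexp_mul_sqrt_mul_le ha ht.ne'
    (g := fun l ↦ psiFactor q l * (derivative (sphericalPoly q n)).eval l)
    (fun l hl ↦ (hasDerivAt_psiFactor q (sq_sub_sq_pos_of_mem_Icc hq hl).ne').mul
      (Polynomial.hasDerivAt _ l))
    (((continuousOn_psiFactorDeriv hq).mul (Polynomial.continuousOn _)).add
      ((continuousOn_psiFactor hq).mul (Polynomial.continuousOn _)))
    (fun l hl ↦ (hB n l hl).1) (fun l hl ↦ (hB n l hl).2)).trans ?_
  rw [abs_of_pos ht]
  gcongr
  exact le_max_left _ _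
end

section
/- Let a < b be reals, let p : [a,b] → ℝ be three times continuously differentiable and q : [a,b] → ℝ continuously differentiable, with p'(a) = 0, p''(a) ≠ 0, and set ε = sgn p''(a). Then the limit as x → a⁺ of Q_{1,1}(x) := q(x)/(ε p'(x)) − q(a)/(√(2ε p''(a)) · √(ε(p(x) − p(a)))) exists and equals ε( q'(a)/p''(a) − q(a) p'''(a)/(3 p''(a)²) ). -/
open Set Real Filter Topology

/-!
Write `t = x - a` and `E = ε p''(a) = |p''(a)|`. Taylor's formula with Peano remainder gives
`ε p'(x) = E t + (ε p'''(a)/2) t² + o(t²)`, `ε (p(x) - p(a)) = E t²/2 + (ε p'''(a)/6) t³ + o(t³)`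
and `q(x) = q(a) + q'(a) t + o(t)`, the remainders being controlled by L'Hôpital's rule.
Hence `√(2E) √(ε (p(x) - p(a))) = t √(E² + 2E β t)` with `β → ε p'''(a)/6`,
the singular terms `q(a)/(E t)` of the two quotients cancel, and the next-order terms leave
`q'(a)/E + q(a) (ε p'''(a)/6 - ε p'''(a)/2)/E²`.
-/

section

variable {f f' : ℝ → ℝ} {a : ℝ}

theorem tendsto_div_pow_succ_of_hasDerivAt (n : ℕ) {l : ℝ}
    (hf : ∀ᶠ x in 𝓝[>] a, HasDerivAt f (f' x) x) (hf0 : Tendsto f (𝓝[>] a) (𝓝 0))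
    (h : Tendsto (fun x => f' x / (x - a) ^ n) (𝓝[>] a) (𝓝 l)) :
    Tendsto (fun x => f x / (x - a) ^ (n + 1)) (𝓝[>] a) (𝓝 (l / (n + 1))) := by
  have hg : ∀ x, HasDerivAt (fun x => (x - a) ^ (n + 1)) ((n + 1) * (x - a) ^ n) x := fun x => by
    simpa using ((hasDerivAt_id x).sub_const a).fun_pow (n + 1)
  have hg0 : Tendsto (fun x => (x - a) ^ (n + 1)) (𝓝[>] a) (𝓝 0) := by
    refine tendsto_nhdsWithin_of_tendsto_nhds ?_
    simpa using ((by fun_prop : Continuous fun x : ℝ => (x - a) ^ (n + 1)).tendsto a)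
  refine HasDerivAt.lhopital_zero_nhdsGT hf (.of_forall hg)
    (eventually_mem_nhdsWithin.mono fun x hx => ?_) hf0 hg0 ?_
  · have : 0 < x - a := sub_pos.2 hx
    positivity
  · refine (h.div_const (n + 1)).congr fun x => ?_
    rw [div_div, mul_comm]

theorem tendsto_div_sub_of_hasDerivWithinAt_Ioi {c : ℝ} (h : HasDerivWithinAt f c (Ioi a) a) :
    Tendsto (fun x => (f x - f a) / (x - a)) (𝓝[>] a) (𝓝 c) :=
  ((hasDerivWithinAt_iff_tendsto_slope' (lt_irrefl a)).1 h).congr fun x => slope_def_field f a x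

theorem tendsto_taylor_two_remainder (hf : ∀ᶠ x in 𝓝[>] a, HasDerivAt f (f' x) x)
    (hfa : ContinuousWithinAt f (Ioi a) a) {c : ℝ} (hf' : HasDerivWithinAt f' c (Ioi a) a) :
    Tendsto (fun x => (f x - f a - f' a * (x - a)) / (x - a) ^ 2) (𝓝[>] a) (𝓝 (c / 2)) := by
  have hslope : Tendsto (fun x => (f' x - f' a) / (x - a) ^ 1) (𝓝[>] a) (𝓝 c) := by
    simpa using tendsto_div_sub_of_hasDerivWithinAt_Ioi hf'
  have := tendsto_div_pow_succ_of_hasDerivAt 1 (f := fun x => f x - f a - f' a * (x - a))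
    (hf.mono fun x hx => by
      simpa using (hx.sub_const (f a)).fun_sub (((hasDerivAt_id' x).sub_const a).const_mul (f' a)))
    ?_ hslope
  · simpa [one_add_one_eq_two] using this
  · have : ContinuousWithinAt (fun x => f x - f a - f' a * (x - a)) (Ioi a) a := by fun_prop
    simpa using this.tendsto

theorem tendsto_taylor_three_remainder {f'' : ℝ → ℝ}
    (hf : ∀ᶠ x in 𝓝[>] a, HasDerivAt f (f' x) x) (hf' : ∀ᶠ x in 𝓝[>] a, HasDerivAt f' (f'' x) x)
    (hfa : ContinuousWithinAt f (Ioi a) a) (hf'a : ContinuousWithinAt f' (Ioi a) a) {c : ℝ}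
    (hf'' : HasDerivWithinAt f'' c (Ioi a) a) :
    Tendsto (fun x => (f x - f a - f' a * (x - a) - f'' a / 2 * (x - a) ^ 2) / (x - a) ^ 3)
      (𝓝[>] a) (𝓝 (c / 6)) := by
  have := tendsto_div_pow_succ_of_hasDerivAt 2
    (f := fun x => f x - f a - f' a * (x - a) - f'' a / 2 * (x - a) ^ 2)
    (hf.mono fun x hx => by
      refine (((hx.sub_const (f a)).fun_sub
        (((hasDerivAt_id' x).sub_const a).const_mul (f' a))).fun_sub
        ((((hasDerivAt_id' x).sub_const a).fun_pow 2).const_mul (f'' a / 2))).congr_deriv ?_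
      norm_num
      ring)
    ?_ (tendsto_taylor_two_remainder hf' hf'a hf'')
  · convert this using 2
    norm_num [div_div]
  · have : ContinuousWithinAt (fun x => f x - f a - f' a * (x - a) - f'' a / 2 * (x - a) ^ 2)
        (Ioi a) a := by fun_prop
    simpa using this.tendsto

theorem HasDerivWithinAt.Ioi_of_Icc {b c : ℝ} (hab : a < b)
    (h : HasDerivWithinAt f c (Icc a b) a) : HasDerivWithinAt f c (Ioi a) a :=
  h.mono_of_mem_nhdsWithin (mem_of_superset (Ioo_mem_nhdsGT hab) Ioo_subset_Icc_self)

theorem eventually_nhdsGT_hasDerivAt_of_Icc {b : ℝ} (hab : a < b)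
    (hf : ∀ x ∈ Icc a b, HasDerivWithinAt f (f' x) (Icc a b) x) :
    ∀ᶠ x in 𝓝[>] a, HasDerivAt f (f' x) x :=
  Filter.mem_of_superset (Ioo_mem_nhdsGT hab) fun x hx =>
    (hf x (Ioo_subset_Icc_self hx)).hasDerivAt (Icc_mem_nhds hx.1 hx.2)

end

theorem tendsto_div_sub_div_sqrt {ι : Type*} {l : Filter ι} {t P₁ P₀ Q : ι → ℝ}
    {E q₀ A B C : ℝ} (hE : 0 < E) (ht : Tendsto t l (𝓝[>] 0))
    (hA : Tendsto (fun i => (P₁ i - E * t i) / t i ^ 2) l (𝓝 A))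
    (hB : Tendsto (fun i => (P₀ i - E / 2 * t i ^ 2) / t i ^ 3) l (𝓝 B))
    (hC : Tendsto (fun i => (Q i - q₀) / t i) l (𝓝 C)) :
    Tendsto (fun i => Q i / P₁ i - q₀ / (√(2 * E) * √(P₀ i))) l
      (𝓝 (C / E + q₀ * (B - A) / E ^ 2)) := by
  set α := fun i => (P₁ i - E * t i) / t i ^ 2
  set β := fun i => (P₀ i - E / 2 * t i ^ 2) / t i ^ 3
  set γ := fun i => (Q i - q₀) / t i
  set S := fun i => √(E ^ 2 + 2 * E * β i * t i)
  have ht0 : Tendsto t l (𝓝 0) := tendsto_nhds_of_tendsto_nhdsWithin ht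
  have hS : Tendsto S l (𝓝 E) := by
    have := ((hB.const_mul (2 * E)).mul ht0).const_add (E ^ 2) |>.sqrt
    simpa [S, mul_assoc, Real.sqrt_sq hE.le] using this
  have hD : Tendsto (fun i => E + α i * t i) l (𝓝 E) := by
    simpa using (hA.mul ht0).const_add E
  -- `(S - E) / t = 2 E β / (S + E)` absorbs the cancelling `1/t` singularities.
  have hlim : Tendsto (fun i => γ i / (E + α i * t i)
      + q₀ * (2 * E * β i / (S i + E) - α i) / ((E + α i * t i) * S i)) l
      (𝓝 (C / E + q₀ * (B - A) / E ^ 2)) := by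
    have hval : C / E + q₀ * (B - A) / E ^ 2
        = C / E + q₀ * (2 * E * B / (E + E) - A) / (E * E) := by
      field_simp
      ring
    rw [hval]
    exact (hC.div hD hE.ne').add (((((hB.const_mul (2 * E)).div (hS.add_const E)
      (by positivity)).sub hA).const_mul q₀).div (hD.mul hS) (by positivity))
  refine hlim.congr' ?_
  filter_upwards [ht self_mem_nhdsWithin, hD.eventually_const_lt hE, hS.eventually_const_lt hE]
    with i (hti : 0 < t i) (hDi : 0 < E + α i * t i) (hSi : 0 < S i)
  have hR : 0 < E ^ 2 + 2 * E * β i * t i := Real.sqrt_pos.1 hSi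
  have hS2 : S i ^ 2 = E ^ 2 + 2 * E * β i * t i := Real.sq_sqrt hR.le
  have hP₁ : P₁ i = t i * (E + α i * t i) := by
    simp only [α]
    field_simp
    ring
  have hP₀ : 2 * E * P₀ i = (t i * S i) ^ 2 := by
    rw [mul_pow, hS2]
    simp only [β]
    field_simp
    ring
  have hQ : Q i = q₀ + γ i * t i := by
    simp only [γ]
    field_simp
    ring
  have hroot : √(2 * E) * √(P₀ i) = t i * S i := by
    rw [← Real.sqrt_mul (by positivity), hP₀, Real.sqrt_sq (by positivity)]
  rw [hroot, hP₁, hQ]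
  clear_value α β γ S
  field_simp
  linear_combination (-q₀) * hS2

theorem Q11_limit_at_critical_point_general (a b : ℝ) (hab : a < b)
    (p p' p'' p''' q q' : ℝ → ℝ)
    (hp : ∀ x ∈ Icc a b, HasDerivWithinAt p (p' x) (Icc a b) x)
    (hp' : ∀ x ∈ Icc a b, HasDerivWithinAt p' (p'' x) (Icc a b) x)
    (hp'' : ∀ x ∈ Icc a b, HasDerivWithinAt p'' (p''' x) (Icc a b) x)
    (hq : ∀ x ∈ Icc a b, HasDerivWithinAt q (q' x) (Icc a b) x)
    (hcrit : p' a = 0) (hnd : p'' a ≠ 0)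
    (ε : ℝ) (hε : ε = Real.sign (p'' a)) :
    Tendsto (fun x =>
        q x / (ε * p' x)
          - q a / (Real.sqrt (2 * (ε * p'' a)) * Real.sqrt (ε * (p x - p a))))
      (nhdsWithin a (Ioi a))
      (nhds (ε * (q' a / p'' a - q a * p''' a / (3 * (p'' a)^2)))) := by
  have ha : a ∈ Icc a b := ⟨le_rfl, hab.le⟩
  have hE : 0 < ε * p'' a := hε ▸ Real.sign_mul_pos_of_ne_zero _ hnd
  have hp'a := (hp' a ha).Ioi_of_Icc hab
  have hp''a := (hp'' a ha).Ioi_of_Icc hab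
  have ht : Tendsto (fun x => x - a) (𝓝[>] a) (𝓝[>] 0) := by
    refine tendsto_nhdsWithin_iff.2 ⟨tendsto_nhdsWithin_of_tendsto_nhds ?_,
      eventually_mem_nhdsWithin.mono fun x hx => mem_Ioi.2 (sub_pos.2 hx)⟩
    simpa using (continuous_sub_right a).tendsto a
  have hA := (tendsto_taylor_two_remainder (eventually_nhdsGT_hasDerivAt_of_Icc hab hp')
    hp'a.continuousWithinAt hp''a).const_mul ε
  have hB := (tendsto_taylor_three_remainder (eventually_nhdsGT_hasDerivAt_of_Icc hab hp)
    (eventually_nhdsGT_hasDerivAt_of_Icc hab hp') ((hp a ha).Ioi_of_Icc hab).continuousWithinAt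
    hp'a.continuousWithinAt hp''a).const_mul ε
  have hC := tendsto_div_sub_of_hasDerivWithinAt_Ioi ((hq a ha).Ioi_of_Icc hab)
  have key := tendsto_div_sub_div_sqrt (P₁ := fun x => ε * p' x) (P₀ := fun x => ε * (p x - p a))
    hE ht (hA.congr fun x => by rw [hcrit]; ring) (hB.congr fun x => by rw [hcrit]; ring) hC
  convert key using 2
  obtain rfl | rfl : ε = -1 ∨ ε = 1 := hε ▸ Real.sign_apply_eq_of_ne_zero _ hnd
  all_goals field_simp; ring

/-- The limit as `x → a⁺` of
`Q_{1,1}(x) = q(x)/(ε p'(x)) − q(a)/(√(2ε p''(a)) √(ε(p(x) − p(a))))`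
exists and equals `ε( q'(a)/p''(a) − q(a)p'''(a)/(3 p''(a)²) )`, where `ε = sgn p''(a)`.
Here `p` is `C³` on `[a,b]` and `q` is `C¹` on `[a,b]`, encoded through the derivative
functions `p', p'', p''', q'` (with `p'''` and `q'` continuous on `[a,b]`). -/
theorem Q11_limit_at_critical_point (a b : ℝ) (hab : a < b)
    (p p' p'' p''' q q' : ℝ → ℝ)
    (hp : ∀ x ∈ Icc a b, HasDerivWithinAt p (p' x) (Icc a b) x)
    (hp' : ∀ x ∈ Icc a b, HasDerivWithinAt p' (p'' x) (Icc a b) x)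
    (hp'' : ∀ x ∈ Icc a b, HasDerivWithinAt p'' (p''' x) (Icc a b) x)
    (hp'''c : ContinuousOn p''' (Icc a b))
    (hq : ∀ x ∈ Icc a b, HasDerivWithinAt q (q' x) (Icc a b) x)
    (hq'c : ContinuousOn q' (Icc a b))
    (hcrit : p' a = 0) (hnd : p'' a ≠ 0)
    (ε : ℝ) (hε : ε = Real.sign (p'' a)) :
    Tendsto (fun x =>
        q x / (ε * p' x)
          - q a / (Real.sqrt (2 * (ε * p'' a)) * Real.sqrt (ε * (p x - p a))))
      (nhdsWithin a (Ioi a))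
      (nhds (ε * (q' a / p'' a - q a * p''' a / (3 * (p'' a)^2)))) :=
  Q11_limit_at_critical_point_general a b hab p p' p'' p''' q q' hp hp' hp'' hq hcrit hnd ε hε
end

section
/- Let α ∈ ℝ with α ≠ 0, let ε = sgn α, and let A > 0, t > 0. Then | ∫_0^A e^{i t α x²} dx − (e^{ε π i/4}/2) √(π/(|α| t)) | ≤ 1/(A |α| t). -/
/-!
For `Re b > 0` the Gaussian `∫₀^∞ e^{-bx²} dx = (π/b)^{1/2}/2` is absolutely convergent, so the
truncation error is the tail `∫_A^∞ e^{-bx²} dx`. Integrating by parts against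
`F(x) = e^{-bx²}/(-2bx)` bounds every `∫_A^B e^{-bx²} dx` by `1/(A|b|)`: the two boundary terms
and the remaining integral of `e^{-bx²}/(2bx²)` together contribute exactly this amount. Both
sides of the resulting estimate are continuous in `b` on `Re b ≥ 0, b ≠ 0`, so it persists on the
imaginary axis; for `b = -itα` the principal square root `(π/b)^{1/2}` is `e^{επi/4}√(π/(|α|t))`.
-/

open Real MeasureTheory intervalIntegral Complex Filter Topology Set
open scoped Interval

section GaussianTail

variable {b : ℂ}

lemma norm_cexp_neg_mul_sq_le_one (hb : 0 ≤ b.re) (x : ℝ) : ‖cexp (-b * x ^ 2)‖ ≤ 1 := by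
  rw [norm_exp, Real.exp_le_one_iff]
  have : (-b * (x : ℂ) ^ 2).re = -b.re * x ^ 2 := by simp [← ofReal_pow]
  rw [this]
  nlinarith [sq_nonneg x]

lemma hasDerivAt_cexp_neg_mul_sq_div (hb : b ≠ 0) {x : ℝ} (hx : x ≠ 0) :
    HasDerivAt (fun y : ℝ ↦ cexp (-b * y ^ 2) / (-2 * b * y))
      (cexp (-b * x ^ 2) + cexp (-b * x ^ 2) / (2 * b * x ^ 2)) x := by
  have hx' : (x : ℂ) ≠ 0 := ofReal_ne_zero.mpr hx
  have hnum :
      HasDerivAt (fun y : ℂ ↦ cexp (-b * y ^ 2)) (cexp (-b * x ^ 2) * (-b * (2 * x))) x := by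
    simpa using ((hasDerivAt_pow 2 (x : ℂ)).const_mul (-b)).cexp
  have hden : HasDerivAt (fun y : ℂ ↦ -2 * b * y) (-2 * b) x := by
    simpa using (hasDerivAt_id (x : ℂ)).const_mul (-2 * b)
  refine ((hnum.div hden (by simp [hb, hx'])).comp_ofReal).congr_deriv ?_
  field_simp
  ring

lemma norm_cexp_neg_mul_sq_div_le (hb : 0 ≤ b.re) {x : ℝ} (hx : 0 < x) :
    ‖cexp (-b * x ^ 2) / (-2 * b * x)‖ ≤ 1 / (2 * ‖b‖ * x) := by
  rw [norm_div]
  simp only [norm_mul, norm_neg, norm_real, Real.norm_eq_abs, abs_of_pos hx, RCLike.norm_ofNat]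
  gcongr
  exact norm_cexp_neg_mul_sq_le_one hb x

lemma norm_integral_cexp_neg_mul_sq_div_le (hb : 0 ≤ b.re) (hb0 : b ≠ 0) {A B : ℝ}
    (hA : 0 < A) (hAB : A ≤ B) :
    ‖∫ x in A..B, cexp (-b * x ^ 2) / (2 * b * x ^ 2)‖ ≤ (1 / A - 1 / B) / (2 * ‖b‖) := by
  have h0 : (0 : ℝ) ∉ [[A, B]] := by
    rw [uIcc_of_le hAB]; exact fun h ↦ hA.not_ge h.1
  have hbound : ∀ x ∈ Ioc A B,
      ‖cexp (-b * x ^ 2) / (2 * b * x ^ 2)‖ ≤ (2 * ‖b‖)⁻¹ * x ^ (-2 : ℤ) := by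
    intro x hx
    have hx0 : 0 < x := hA.trans_le hx.1.le
    rw [norm_div, zpow_neg, zpow_two, ← sq, ← mul_inv]
    simp only [norm_mul, norm_pow, norm_real, Real.norm_eq_abs, abs_of_pos hx0, RCLike.norm_ofNat]
    rw [← one_div]
    gcongr
    exact norm_cexp_neg_mul_sq_le_one hb x
  calc ‖∫ x in A..B, cexp (-b * x ^ 2) / (2 * b * x ^ 2)‖
      ≤ ∫ x in A..B, (2 * ‖b‖)⁻¹ * x ^ (-2 : ℤ) :=
        intervalIntegral.norm_integral_le_of_norm_le hAB (ae_of_all _ hbound)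
          ((intervalIntegrable_zpow (Or.inr h0)).const_mul _)
    _ = (1 / A - 1 / B) / (2 * ‖b‖) := by
        rw [intervalIntegral.integral_const_mul, integral_zpow (Or.inr ⟨by norm_num, h0⟩)]
        norm_num
        ring

lemma norm_integral_cexp_neg_mul_sq_le (hb : 0 ≤ b.re) (hb0 : b ≠ 0) {A B : ℝ}
    (hA : 0 < A) (hAB : A ≤ B) :
    ‖∫ x in A..B, cexp (-b * x ^ 2)‖ ≤ 1 / (A * ‖b‖) := by
  set F : ℝ → ℂ := fun y ↦ cexp (-b * y ^ 2) / (-2 * b * y)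
  set g : ℝ → ℂ := fun x ↦ cexp (-b * x ^ 2) / (2 * b * x ^ 2)
  have hpos : ∀ x ∈ [[A, B]], 0 < x := fun x hx ↦ hA.trans_le (uIcc_of_le hAB ▸ hx).1
  have hexp_int : IntervalIntegrable (fun x : ℝ ↦ cexp (-b * x ^ 2)) volume A B :=
    (by fun_prop : Continuous fun x : ℝ ↦ cexp (-b * x ^ 2)).intervalIntegrable A B
  have hg_int : IntervalIntegrable g volume A B := by
    refine ContinuousOn.intervalIntegrable fun x hx ↦ ContinuousAt.continuousWithinAt ?_
    have := (hpos x hx).ne'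
    fun_prop (disch := simp [hb0, this])
  -- integration by parts in the form `e^{-bx²} = F' - g`
  have hibp : ∫ x in A..B, cexp (-b * x ^ 2) = F B - F A - ∫ x in A..B, g x := by
    rw [← integral_eq_sub_of_hasDerivAt
      (fun x hx ↦ hasDerivAt_cexp_neg_mul_sq_div hb0 (hpos x hx).ne') (hexp_int.add hg_int),
      integral_add hexp_int hg_int, add_sub_cancel_right]
  have hB : 0 < B := hA.trans_le hAB
  have hb' : 0 < ‖b‖ := norm_pos_iff.mpr hb0
  calc ‖∫ x in A..B, cexp (-b * x ^ 2)‖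
      ≤ ‖F B‖ + ‖F A‖ + ‖∫ x in A..B, g x‖ := by
        rw [hibp]; exact (norm_sub_le _ _).trans (by gcongr; exact norm_sub_le _ _)
    _ ≤ 1 / (2 * ‖b‖ * B) + 1 / (2 * ‖b‖ * A) + (1 / A - 1 / B) / (2 * ‖b‖) := by
        gcongr
        · exact norm_cexp_neg_mul_sq_div_le hb hB
        · exact norm_cexp_neg_mul_sq_div_le hb hA
        · exact norm_integral_cexp_neg_mul_sq_div_le hb hb0 hA hAB
    _ = 1 / (A * ‖b‖) := by field_simp; ring

lemma norm_integral_Ioi_cexp_neg_mul_sq_le (hb : 0 < b.re) {A : ℝ} (hA : 0 < A) :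
    ‖∫ x in Ioi A, cexp (-b * x ^ 2)‖ ≤ 1 / (A * ‖b‖) := by
  have hb0 : b ≠ 0 := fun h ↦ by simp [h] at hb
  have htend := intervalIntegral_tendsto_integral_Ioi A
    (integrable_cexp_neg_mul_sq hb).integrableOn tendsto_id
  refine le_of_tendsto htend.norm ?_
  filter_upwards [eventually_ge_atTop A] with B hB
  exact norm_integral_cexp_neg_mul_sq_le hb.le hb0 hA hB

lemma norm_integral_cexp_neg_mul_sq_sub_le_of_re_pos (hb : 0 < b.re) {A : ℝ} (hA : 0 < A) :
    ‖(∫ x in (0 : ℝ)..A, cexp (-b * x ^ 2)) - (π / b) ^ (1 / 2 : ℂ) / 2‖ ≤ 1 / (A * ‖b‖) := by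
  have hint := integrable_cexp_neg_mul_sq hb
  rw [← integral_gaussian_complex_Ioi hb, integral_of_le hA.le, ← Ioc_union_Ioi_eq_Ioi hA.le,
    setIntegral_union (Ioc_disjoint_Ioi le_rfl) measurableSet_Ioi hint.integrableOn
      hint.integrableOn, sub_add_cancel_left, norm_neg]
  exact norm_integral_Ioi_cexp_neg_mul_sq_le hb hA

lemma pi_div_mem_slitPlane (hb : 0 ≤ b.re) (hb0 : b ≠ 0) : (π / b : ℂ) ∈ slitPlane := by
  have hn : 0 < normSq b := normSq_pos.mpr hb0
  rcases hb.lt_or_eq with hre | hre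
  · left
    simp only [div_re, ofReal_re, ofReal_im, zero_mul]
    positivity
  · right
    have him : b.im ≠ 0 := fun him ↦ hb0 (ext hre.symm him)
    simp [div_im, him, hn.ne', Real.pi_ne_zero]

lemma norm_integral_cexp_neg_mul_sq_sub_le (hb : 0 ≤ b.re) (hb0 : b ≠ 0) {A : ℝ} (hA : 0 < A) :
    ‖(∫ x in (0 : ℝ)..A, cexp (-b * x ^ 2)) - (π / b) ^ (1 / 2 : ℂ) / 2‖ ≤ 1 / (A * ‖b‖) := by
  have hlhs : ContinuousAt
      (fun c : ℂ ↦ ‖(∫ x in (0 : ℝ)..A, cexp (-c * x ^ 2)) - (π / c) ^ (1 / 2 : ℂ) / 2‖) b := by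
    have hint : Continuous fun c : ℂ ↦ ∫ x in (0 : ℝ)..A, cexp (-c * x ^ 2) :=
      continuous_parametric_intervalIntegral_of_continuous' (by fun_prop) 0 A
    have hpow : ContinuousAt (fun c : ℂ ↦ (π / c) ^ (1 / 2 : ℂ)) b :=
      (continuousAt_cpow_const (pi_div_mem_slitPlane hb hb0)).comp
        (continuousAt_const.div continuousAt_id hb0)
    exact (hint.continuousAt.sub (hpow.div_const 2)).norm
  have hrhs : ContinuousAt (fun c : ℂ ↦ 1 / (A * ‖c‖)) b :=
    continuousAt_const.div (continuousAt_const.mul continuous_norm.continuousAt)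
      (by positivity)
  have hshift : Tendsto (fun δ : ℝ ↦ b + δ) (𝓝[>] 0) (𝓝 b) := by
    have hcont : Continuous fun δ : ℝ ↦ b + δ := by fun_prop
    exact (hcont.tendsto' 0 b (by simp)).mono_left nhdsWithin_le_nhds
  refine le_of_tendsto_of_tendsto (hlhs.tendsto.comp hshift) (hrhs.tendsto.comp hshift) ?_
  filter_upwards [self_mem_nhdsWithin] with δ (hδ : 0 < δ)
  have hre : 0 < (b + δ).re := by simpa using add_pos_of_nonneg_of_pos hb hδ
  exact norm_integral_cexp_neg_mul_sq_sub_le_of_re_pos hre hA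

end GaussianTail

lemma cpow_half_pi_div_neg_I_mul {β : ℝ} (hβ : β ≠ 0) :
    (π / -(I * β)) ^ (1 / 2 : ℂ) = cexp (Real.sign β * π * I / 4) * √(π / |β|) := by
  set w := cexp (Real.sign β * π * I / 4) * (√(π / |β|) : ℂ) with hw
  have hr : 0 < √(π / |β|) := Real.sqrt_pos.mpr (by positivity)
  have hsq : w ^ 2 = π / -(I * β) := by
    have hroot : (√(π / |β|) : ℂ) ^ 2 = π / |β| := by
      rw [← ofReal_pow, Real.sq_sqrt (by positivity), ofReal_div]
    rw [hw, mul_pow, hroot, ← Complex.exp_nat_mul]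
    have hβ' : (β : ℂ) ≠ 0 := ofReal_ne_zero.mpr hβ
    rcases hβ.lt_or_gt with h | h
    · rw [Real.sign_of_neg h, abs_of_neg h]
      have : ((2 : ℕ) : ℂ) * (((-1 : ℝ) : ℂ) * π * I / 4) = -(π / 2 * I) := by push_cast; ring
      rw [this, Complex.exp_neg, exp_pi_div_two_mul_I]
      push_cast
      field_simp
    · rw [Real.sign_of_pos h, abs_of_pos h]
      have : ((2 : ℕ) : ℂ) * (((1 : ℝ) : ℂ) * π * I / 4) = π / 2 * I := by push_cast; ring
      rw [this, exp_pi_div_two_mul_I]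
      field_simp
      exact I_sq
  have hre : 0 < w.re := by
    rw [hw, re_mul_ofReal, exp_re]
    refine mul_pos (mul_pos (Real.exp_pos _) (Real.cos_pos_of_mem_Ioo ⟨?_, ?_⟩)) hr <;>
      rcases Real.sign_apply_eq_of_ne_zero β hβ with h | h <;> simp [h] <;> linarith [Real.pi_pos]
  rw [← hsq, one_div]
  exact sq_cpow_two_inv hre

/-- Truncated Fresnel integral estimate: for `α ≠ 0`, `ε = sgn α`, `A > 0` and `t > 0`,
`|∫_0^A e^{itαx²} dx − (e^{επi/4}/2)√(π/(|α|t))| ≤ 1/(A|α|t)`. -/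
theorem fresnel_truncation (α : ℝ) (hα : α ≠ 0) (ε : ℝ) (hε : ε = Real.sign α)
    (A t : ℝ) (hA : 0 < A) (ht : 0 < t) :
    ‖(∫ x in (0:ℝ)..A, Complex.exp (Complex.I * t * α * x^2))
      - Complex.exp (ε * Real.pi * Complex.I / 4) / 2 *
          Complex.ofReal (Real.sqrt (Real.pi / (|α| * t)))‖
    ≤ 1 / (A * |α| * t) := by
  have htα : t * α ≠ 0 := mul_ne_zero ht.ne' hα
  have hsign : Real.sign (t * α) = Real.sign α := by
    rcases hα.lt_or_gt with h | h
    · rw [Real.sign_of_neg h, Real.sign_of_neg (mul_neg_of_pos_of_neg ht h)]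
    · rw [Real.sign_of_pos h, Real.sign_of_pos (mul_pos ht h)]
  have habs : |t * α| = |α| * t := by rw [abs_mul, abs_of_pos ht, mul_comm]
  have hb : (-(I * (t * α : ℝ))).re = 0 := by simp
  have hbound := norm_integral_cexp_neg_mul_sq_sub_le hb.ge (by simpa using htα) hA
  rw [cpow_half_pi_div_neg_I_mul htα, hsign, ← hε, habs, norm_neg, norm_mul, norm_I, one_mul,
    norm_real, Real.norm_eq_abs, habs, ← mul_assoc] at hbound
  convert hbound using 3
  · congr! 3 with x
    push_cast
    ring
  · ring
end
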